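/- arXiv:2405.20954 — 3 statements merged into one kernel-verified Lean document; each statement's English description precedes it below -/
import Mathlib

section
/- With the same definitions and assumptions (0 < T ≤ 0.4, 0 < τ < 1), the piecewise-linear Heaviside approximation H_T is monotone nondecreasing on [0,1] and takes values in [0,1]. -/
open Filter Topology Set

/-- The piecewise-linear Heaviside approximation `H_T(p, τ)` of the EAST method. -/
noncomputable def Hpl (T τ p : ℝ) : ℝ :=
  let τm : ℝ := 5 * T * min τ (1 - τ)
  let m1 : ℝ := T / (τ - τm / 2)
  let m2 : ℝ := (1 - 2 * T) / τm
  let m3 : ℝ := T / (1 - τ - τm / 2)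
  if p < τ - τm / 2 then p * m1
  else if p > τ + τm / 2 then p * m3 + (1 - T - m3 * (τ + τm / 2))
  else p * m2 + (0.5 - m2 * τ)

set_option maxHeartbeats 800000 in
/-- `H_T` is monotone nondecreasing on `[0,1]` and takes values in `[0,1]`. -/
theorem Hpl_monotoneOn_and_mem_Icc (T τ : ℝ) (hT0 : 0 < T) (hT : T ≤ 0.4)
    (hτ0 : 0 < τ) (hτ1 : τ < 1) :
    MonotoneOn (fun p => Hpl T τ p) (Set.Icc (0 : ℝ) 1) ∧
    ∀ p ∈ Set.Icc (0 : ℝ) 1, Hpl T τ p ∈ Set.Icc (0 : ℝ) 1 := by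
  have hH : ∀ p, Hpl T τ p =
      if p < τ - 5 * T * min τ (1 - τ) / 2 then
        p * (T / (τ - 5 * T * min τ (1 - τ) / 2))
      else if p > τ + 5 * T * min τ (1 - τ) / 2 then
        p * (T / (1 - τ - 5 * T * min τ (1 - τ) / 2)) +
          (1 - T - T / (1 - τ - 5 * T * min τ (1 - τ) / 2) * (τ + 5 * T * min τ (1 - τ) / 2))
      else p * ((1 - 2 * T) / (5 * T * min τ (1 - τ))) +
          (0.5 - (1 - 2 * T) / (5 * T * min τ (1 - τ)) * τ) := fun p => rfl
  have hmin : 0 < min τ (1 - τ) := lt_min hτ0 (by linarith)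
  set M := min τ (1 - τ) with hMdef
  set τm := 5 * T * M with hτmdef
  have hτm0 : 0 < τm := by positivity
  have hM1 : M ≤ τ := min_le_left _ _
  have hM2 : M ≤ 1 - τ := min_le_right _ _
  have hτmM : τm ≤ 2 * M := by nlinarith [mul_nonneg (by linarith : (0:ℝ) ≤ 2 - 5 * T) hmin.le]
  set a := τ - τm / 2 with hadef
  set b := τ + τm / 2 with hbdef
  set c := 1 - τ - τm / 2 with hcdef
  set m1 := T / a with hm1def
  set m2 := (1 - 2 * T) / τm with hm2def
  set m3 := T / c with hm3def
  clear_value m3 m2 m1 c b a τm M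
  have ha0 : 0 ≤ a := by linarith
  have hb1 : b ≤ 1 := by linarith
  have hab : a < b := by linarith
  have hcb : c = 1 - b := by linarith
  have hc0 : 0 ≤ c := by linarith
  have hm10 : 0 ≤ m1 := by rw [hm1def]; exact div_nonneg hT0.le ha0
  have hm30 : 0 ≤ m3 := by rw [hm3def]; exact div_nonneg hT0.le hc0
  have hm20 : 0 < m2 := by rw [hm2def]; exact div_pos (by linarith) hτm0
  have hm2τm : m2 * τm = 1 - 2 * T := by rw [hm2def]; exact div_mul_cancel₀ _ hτm0.ne'
  -- left branch bounds
  have hL : ∀ p, 0 ≤ p → p < a → 0 ≤ Hpl T τ p ∧ Hpl T τ p ≤ T := by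
    intro p hp0 hpa
    rw [hH p, if_pos hpa]
    have ha' : 0 < a := lt_of_le_of_lt hp0 hpa
    have hm1a : m1 * a = T := by rw [hm1def]; exact div_mul_cancel₀ _ ha'.ne'
    exact ⟨mul_nonneg hp0 hm10, by nlinarith [mul_le_mul_of_nonneg_right hpa.le hm10]⟩
  -- middle branch value and bounds
  have hMid : ∀ p, a ≤ p → p ≤ b →
      Hpl T τ p = p * m2 + (0.5 - m2 * τ) ∧ T ≤ Hpl T τ p ∧ Hpl T τ p ≤ 1 - T := by
    intro p hpa hpb
    rw [hH p, if_neg (not_lt.mpr hpa), if_neg (not_lt.mpr hpb)]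
    have h1 : m2 * a = m2 * τ - m2 * τm / 2 := by rw [hadef]; ring
    have h2 : m2 * b = m2 * τ + m2 * τm / 2 := by rw [hbdef]; ring
    refine ⟨rfl, ?_, ?_⟩
    · nlinarith [mul_le_mul_of_nonneg_left hpa hm20.le]
    · nlinarith [mul_le_mul_of_nonneg_left hpb hm20.le]
  -- right branch bounds
  have hR : ∀ p, b < p → p ≤ 1 → 1 - T ≤ Hpl T τ p ∧ Hpl T τ p ≤ 1 := by
    intro p hbp hp1
    rw [hH p, if_neg (not_lt.mpr (by linarith : a ≤ p)), if_pos hbp]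
    have hb1' : b < 1 := lt_of_lt_of_le hbp hp1
    have hc' : 0 < c := by linarith
    have hm3c : m3 * c = T := by rw [hm3def]; exact div_mul_cancel₀ _ hc'.ne'
    have h4 : m3 * c = m3 * 1 - m3 * b := by rw [hcb]; ring
    constructor
    · nlinarith [mul_nonneg hm30 (by linarith : (0:ℝ) ≤ p - b)]
    · nlinarith [mul_le_mul_of_nonneg_left hp1 hm30]
  constructor
  · intro p hp q hq hpq
    obtain ⟨hp0, hp1⟩ := hp
    obtain ⟨hq0, hq1⟩ := hq
    show Hpl T τ p ≤ Hpl T τ q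
    rcases lt_or_ge p a with hpa | hpa
    · rcases lt_or_ge q a with hqa | hqa
      · rw [hH p, if_pos hpa, hH q, if_pos hqa]
        exact mul_le_mul_of_nonneg_right hpq hm10
      · rcases le_or_gt q b with hqb | hqb
        · have h1 := hL p hp0 hpa
          have h2 := hMid q hqa hqb
          linarith [h1.2, h2.2.1]
        · have h1 := hL p hp0 hpa
          have h2 := hR q hqb hq1
          linarith [h1.2, h2.1]
    · rcases le_or_gt p b with hpb | hpb
      · rcases le_or_gt q b with hqb | hqb
        · have hqa : a ≤ q := le_trans hpa hpq
          rw [(hMid p hpa hpb).1, (hMid q hqa hqb).1]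
          nlinarith [mul_le_mul_of_nonneg_right hpq hm20.le]
        · have h1 := hMid p hpa hpb
          have h2 := hR q hqb hq1
          linarith [h1.2.2, h2.1]
      · have hqb : b < q := lt_of_lt_of_le hpb hpq
        rw [hH p, if_neg (not_lt.mpr (by linarith : a ≤ p)), if_pos hpb,
            hH q, if_neg (not_lt.mpr (by linarith : a ≤ q)), if_pos hqb]
        nlinarith [mul_le_mul_of_nonneg_right hpq hm30]
  · intro p hp
    obtain ⟨hp0, hp1⟩ := hp
    rw [Set.mem_Icc]
    rcases lt_or_ge p a with hpa | hpa
    · have := hL p hp0 hpa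
      exact ⟨this.1, by linarith [this.2]⟩
    · rcases le_or_gt p b with hpb | hpb
      · have := hMid p hpa hpb
        exact ⟨by linarith [this.2.1], by linarith [this.2.2]⟩
      · have := hR p hpb hp1
        exact ⟨by linarith [this.1], this.2⟩
end

section
/- Let p ∈ ℝ^d be a probability vector with a strictly largest entry at index i* and distinct two largest coordinates. Define g_T(p) ∈ ℝ^d as the L1-normalization of the vector (H_T(p_1, τ_avg(p)), …, H_T(p_d, τ_avg(p))), where τ_avg(p) is the average of the two largest entries of p and H_T is the piecewise-linear Heaviside approximation. Then lim_{T→0⁺} g_T(p) = e_{i*}, the one-hot vector at index i*. -/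
/-!
As `T → 0⁺` the transition window `τ ± τ_m/2` of `H_T(·, τ)` shrinks to the point `τ` and the
outer slopes `m₁, m₃` vanish, so `H_T(q, τ)` tends to `0` for `q < τ` and to `1` for `q > τ`.
The threshold `τ_avg(p)` lies strictly between the largest entry `p_{i*}` and all others, so the
unnormalized vector tends to `e_{i*}`, whose entries sum to `1`, and normalizing commutes with
the limit.
-/

open Filter Topology Set

section Hpl

variable (τ : ℝ)

/-- `5 * T * min τ (1 - τ) / 2` is the half-width `τ_m / 2` of the transition window. -/
lemma tendsto_halfWidth :
    Tendsto (fun T : ℝ => 5 * T * min τ (1 - τ) / 2) (𝓝 0) (𝓝 0) := by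
  simpa using ((continuous_id.const_mul 5).mul_const (min τ (1 - τ))).div_const 2 |>.tendsto 0

/-- The outer slopes `m₁`, `m₃` (with `a = τ`, `a = 1 - τ`). If `a = 0`, the window width is `0`
and the slope is the junk value `T / 0 = 0`. -/
lemma tendsto_div_sub_halfWidth {a : ℝ} (ha : a = 0 → min τ (1 - τ) = 0) :
    Tendsto (fun T : ℝ => T / (a - 5 * T * min τ (1 - τ) / 2)) (𝓝 0) (𝓝 0) := by
  by_cases h : a = 0
  · simp [h, ha h]
  · simpa using! tendsto_id.div ((tendsto_halfWidth τ).const_sub a) (by simpa using h)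

variable {τ} {q : ℝ}

lemma Hpl_tendsto_zero_of_lt (hq : q < τ) : Tendsto (fun T => Hpl T τ q) (𝓝 0) (𝓝 0) := by
  have hlow : ∀ᶠ T : ℝ in 𝓝 0, q < τ - 5 * T * min τ (1 - τ) / 2 :=
    ((tendsto_halfWidth τ).const_sub τ).eventually_const_lt (by simpa using hq)
  have hslope := tendsto_div_sub_halfWidth τ (a := τ) fun h => by simp [h]
  refine (mul_zero q ▸ hslope.const_mul q).congr' ?_
  filter_upwards [hlow] with T hT
  simp only [Hpl, if_pos hT]

lemma Hpl_tendsto_one_of_lt (hq : τ < q) : Tendsto (fun T => Hpl T τ q) (𝓝 0) (𝓝 1) := by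
  have hnot_low : ∀ᶠ T : ℝ in 𝓝 0, ¬ q < τ - 5 * T * min τ (1 - τ) / 2 := by
    filter_upwards [((tendsto_halfWidth τ).const_sub τ).eventually_lt_const (by simpa using hq)]
      with T hT using hT.not_gt
  have hhigh : ∀ᶠ T : ℝ in 𝓝 0, q > τ + 5 * T * min τ (1 - τ) / 2 :=
    ((tendsto_halfWidth τ).const_add τ).eventually_lt_const (by simpa using hq)
  have hslope := tendsto_div_sub_halfWidth τ (a := 1 - τ) fun h => by
    simp [(sub_eq_zero.mp h).symm]
  have hlim := (hslope.const_mul q).add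
    ((tendsto_id.const_sub 1).sub (hslope.mul ((tendsto_halfWidth τ).const_add τ)))
  rw [show q * 0 + (1 - 0 - 0 * (τ + 0)) = (1 : ℝ) by ring] at hlim
  refine hlim.congr' ?_
  filter_upwards [hnot_low, hhigh] with T hT₁ hT₂
  simp only [Hpl, if_neg hT₁, if_pos hT₂, id]

end Hpl

lemma tendsto_div_sum_of_tendsto_ite {α ι : Type*} [Fintype ι] [DecidableEq ι] {l : Filter α}
    {f : ι → α → ℝ} {i₀ : ι} (hf : ∀ j, Tendsto (f j) l (𝓝 (if j = i₀ then 1 else 0))) (i : ι) :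
    Tendsto (fun x => f i x / ∑ j, f j x) l (𝓝 (if i = i₀ then 1 else 0)) := by
  have hsum : Tendsto (fun x => ∑ j, f j x) l (𝓝 1) := by
    simpa using tendsto_finsetSum Finset.univ fun j _ => hf j
  simpa using! (hf i).div hsum one_ne_zero

lemma ciSup_ne_lt {ι α : Type*} [Finite ι] [ConditionallyCompleteLinearOrder α] {f : ι → α}
    {i₀ : ι} [Nonempty {j // j ≠ i₀}] (hf : ∀ j, j ≠ i₀ → f j < f i₀) :
    ⨆ j : {j // j ≠ i₀}, f j.1 < f i₀ := by
  obtain ⟨j, hj⟩ := exists_eq_ciSup_of_finite (f := fun j : {j // j ≠ i₀} => f j.1)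
  exact hj ▸ hf j.1 j.2

theorem gT_tendsto_one_hot_general {d : ℕ} (hd : 2 ≤ d) (p : Fin d → ℝ)
    (istar : Fin d) (hmax : ∀ j, j ≠ istar → p j < p istar) :
    ∀ i : Fin d,
      Tendsto
        (fun T =>
          Hpl T ((p istar + ⨆ j : {j : Fin d // j ≠ istar}, p j.1) / 2) (p i) /
            ∑ j, Hpl T ((p istar + ⨆ j : {j : Fin d // j ≠ istar}, p j.1) / 2) (p j))
        (𝓝[>] (0 : ℝ)) (𝓝 (if i = istar then 1 else 0)) := by
  obtain ⟨j₀, hj₀⟩ := Fintype.exists_ne_of_one_lt_card (by simp; omega) istar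
  have : Nonempty {j : Fin d // j ≠ istar} := ⟨⟨j₀, hj₀⟩⟩
  set M := ⨆ j : {j : Fin d // j ≠ istar}, p j.1
  have hM : M < p istar := ciSup_ne_lt hmax
  have hle : ∀ j, j ≠ istar → p j ≤ M := fun j hj =>
    le_ciSup (f := fun j : {j : Fin d // j ≠ istar} => p j.1) (finite_range _).bddAbove ⟨j, hj⟩
  refine tendsto_div_sum_of_tendsto_ite fun k => ?_
  by_cases hk : k = istar
  · simpa [hk] using (Hpl_tendsto_one_of_lt (by linarith)).mono_left nhdsWithin_le_nhds
  · have hlt : p k < (p istar + M) / 2 := by linarith [hle k hk]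
    simpa [hk] using (Hpl_tendsto_zero_of_lt hlt).mono_left nhdsWithin_le_nhds

/-- the L1-normalized vector of Heaviside approximations at the dynamic
threshold converges coordinatewise to the one-hot vector of the argmax as `T → 0⁺`. -/
theorem gT_tendsto_one_hot {d : ℕ} (hd : 2 ≤ d) (p : Fin d → ℝ)
    (hpos : ∀ i, 0 ≤ p i) (hsum : ∑ i, p i = 1)
    (istar : Fin d) (hmax : ∀ j, j ≠ istar → p j < p istar) :
    ∀ i : Fin d,
      Tendsto
        (fun T =>
          Hpl T ((p istar + ⨆ j : {j : Fin d // j ≠ istar}, p j.1) / 2) (p i) /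
            ∑ j, Hpl T ((p istar + ⨆ j : {j : Fin d // j ≠ istar}, p j.1) / 2) (p j))
        (𝓝[>] (0 : ℝ)) (𝓝 (if i = istar then 1 else 0)) :=
  gT_tendsto_one_hot_general hd p istar hmax
end

section
/- Let p ∈ ℝ^d be a probability vector with distinct entries, and let τ = τ_avg(p) be the average of its two largest entries. For 0 < T < 2(p_{(1)} − p_{(2)})/5 (where p_{(1)}, p_{(2)} are the two largest entries), the sum Σ_{i=1}^d H_T(p_i, τ) of the piecewise-linear Heaviside approximations is strictly positive, and lim_{T→0⁺} Σ_{i=1}^d H_T(p_i, τ) = 1. -/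
open Filter Topology Set

/-- for a probability vector with distinct (strictly ordered) entries and the
dynamic threshold `τ`, the sum of the Heaviside approximations is strictly positive for
small `T`, and tends to `1` as `T → 0⁺`. -/
theorem sum_Hpl_pos_and_tendsto_one {d : ℕ} (hd : 2 ≤ d) (p : Fin d → ℝ)
    (hpos : ∀ i, 0 ≤ p i) (hsum : ∑ i, p i = 1)
    (σ : Equiv.Perm (Fin d)) (hsort : ∀ k l : Fin d, k < l → p (σ l) < p (σ k)) :
    let τ : ℝ := (p (σ ⟨0, by omega⟩) + p (σ ⟨1, by omega⟩)) / 2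
    (∀ T : ℝ, 0 < T → T < 2 * (p (σ ⟨0, by omega⟩) - p (σ ⟨1, by omega⟩)) / 5 →
      0 < ∑ i, Hpl T τ (p i)) ∧
    Tendsto (fun T => ∑ i, Hpl T τ (p i)) (𝓝[>] (0 : ℝ)) (𝓝 1) := by
  intro τ
  have hτ : τ = (p (σ ⟨0, by omega⟩) + p (σ ⟨1, by omega⟩)) / 2 := rfl
  set i0 : Fin d := σ ⟨0, by omega⟩ with hi0
  set i1 : Fin d := σ ⟨1, by omega⟩ with hi1
  have h01 : (⟨0, by omega⟩ : Fin d) < ⟨1, by omega⟩ := by simp [Fin.lt_def]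
  have hg : p i1 < p i0 := hsort _ _ h01
  have hne01 : i1 ≠ i0 := by intro h; rw [h] at hg; exact lt_irrefl _ hg
  have hple : ∀ i, i ≠ i0 → p i ≤ p i1 := by
    intro i hi
    obtain ⟨k, rfl⟩ : ∃ k, σ k = i := ⟨σ.symm i, σ.apply_symm_apply i⟩
    have hk : k ≠ (⟨0, by omega⟩ : Fin d) := by
      intro h; exact hi (by rw [hi0, h])
    have hk1 : 1 ≤ k.val := by
      rcases Nat.eq_zero_or_pos k.val with h | h
      · exact absurd (Fin.ext h) hk
      · omega
    rcases eq_or_lt_of_le hk1 with h | h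
    · have : k = (⟨1, by omega⟩ : Fin d) := Fin.ext h.symm
      rw [this, ← hi1]
    · exact le_of_lt (hsort ⟨1, by omega⟩ k (by simp [Fin.lt_def]; omega))
  have hsum' : p i0 + ∑ i ∈ Finset.univ.erase i0, p i = 1 := by
    rw [Finset.add_sum_erase _ _ (Finset.mem_univ i0)]; exact hsum
  have herase_nn : (0:ℝ) ≤ ∑ i ∈ Finset.univ.erase i0, p i :=
    Finset.sum_nonneg fun i _ => hpos i
  have hp1le : p i0 ≤ 1 := by linarith
  have h2le : p i1 ≤ ∑ i ∈ Finset.univ.erase i0, p i :=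
    Finset.single_le_sum (fun i _ => hpos i) (by simp [Finset.mem_erase, hne01])
  have h12 : p i0 + p i1 ≤ 1 := by linarith
  have hτpos : 0 < τ := by rw [hτ]; linarith [hpos i1]
  have hτhalf : τ ≤ 1/2 := by rw [hτ]; linarith
  have hmin : min τ (1 - τ) = τ := min_eq_left (by linarith)
  -- key bounds
  have key : ∀ T : ℝ, 0 < T → T < 2 * (p i0 - p i1) / 5 →
      0 < τ - 5*T*τ/2 ∧ p i1 < τ - 5*T*τ/2 ∧ τ + 5*T*τ/2 < p i0 ∧
      0 < 1 - τ - 5*T*τ/2 := by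
    intro T hT hT'
    have hbound : 5*T*τ/2 < (p i0 - p i1)/2 := by nlinarith
    have hd1 : p i1 < τ - 5*T*τ/2 := by linarith
    have hd2 : τ + 5*T*τ/2 < p i0 := by linarith
    have hd3 : 0 < 1 - τ - 5*T*τ/2 := by linarith
    exact ⟨lt_of_le_of_lt (hpos i1) hd1, hd1, hd2, hd3⟩
  -- formula
  have hform : ∀ T : ℝ, 0 < T → T < 2 * (p i0 - p i1) / 5 →
      ∑ i, Hpl T τ (p i) =
        (1 - p i0) * (T / (τ - 5*T*τ/2)) +
        (p i0 * (T / (1 - τ - 5*T*τ/2)) +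
          (1 - T - (T / (1 - τ - 5*T*τ/2)) * (τ + 5*T*τ/2))) := by
    intro T hT hT'
    obtain ⟨hd0, hd1, hd2, hd3⟩ := key T hT hT'
    have hHi0 : Hpl T τ (p i0) =
        p i0 * (T / (1 - τ - 5*T*τ/2)) +
          (1 - T - (T / (1 - τ - 5*T*τ/2)) * (τ + 5*T*τ/2)) := by
      simp only [Hpl, hmin]
      rw [if_neg (not_lt.mpr (by nlinarith [mul_pos hT hτpos])), if_pos hd2]
    have hHlow : ∀ i ∈ Finset.univ.erase i0,
        Hpl T τ (p i) = p i * (T / (τ - 5*T*τ/2)) := by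
      intro i hi
      have hle : p i ≤ p i1 := hple i (Finset.ne_of_mem_erase hi)
      simp only [Hpl, hmin]
      rw [if_pos (by linarith)]
    rw [← Finset.add_sum_erase _ _ (Finset.mem_univ i0), hHi0,
      Finset.sum_congr rfl hHlow, ← Finset.sum_mul]
    have he : ∑ i ∈ Finset.univ.erase i0, p i = 1 - p i0 := by linarith
    rw [he]; ring
  constructor
  · intro T hT hT'
    rw [hform T hT hT']
    obtain ⟨hd0, hd1, hd2, hd3⟩ := key T hT hT'
    have hm1 : 0 < T / (τ - 5*T*τ/2) := div_pos hT hd0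
    have hm3 : 0 < T / (1 - τ - 5*T*τ/2) := div_pos hT hd3
    have hT1 : T < 1 := by linarith [hpos i1]
    have h1 : 0 ≤ (1 - p i0) * (T / (τ - 5*T*τ/2)) :=
      mul_nonneg (by linarith) hm1.le
    nlinarith [mul_pos hm3 (by linarith : (0:ℝ) < p i0 - (τ + 5*T*τ/2))]
  · set f : ℝ → ℝ := fun T =>
      (1 - p i0) * (T / (τ - 5*T*τ/2)) +
        (p i0 * (T / (1 - τ - 5*T*τ/2)) +
          (1 - T - (T / (1 - τ - 5*T*τ/2)) * (τ + 5*T*τ/2))) with hf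
    have hev : (fun T => ∑ i, Hpl T τ (p i)) =ᶠ[𝓝[>] (0:ℝ)] f := by
      filter_upwards [Ioo_mem_nhdsGT_of_mem
        (left_mem_Ico.mpr (by linarith : (0:ℝ) < 2 * (p i0 - p i1) / 5))] with T hTm
      exact hform T hTm.1 hTm.2
    have hc1 : ContinuousAt (fun T : ℝ => T / (τ - 5*T*τ/2)) 0 :=
      ContinuousAt.div continuousAt_id (by fun_prop) (by norm_num; linarith)
    have hc3 : ContinuousAt (fun T : ℝ => T / (1 - τ - 5*T*τ/2)) 0 :=
      ContinuousAt.div continuousAt_id (by fun_prop) (by norm_num; linarith)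
    have hcf : ContinuousAt f 0 := by
      rw [hf]
      exact (continuousAt_const.mul hc1).add
        ((continuousAt_const.mul hc3).add
          ((continuousAt_const.sub continuousAt_id).sub
            (hc3.mul (by fun_prop))))
    have hf0 : f 0 = 1 := by rw [hf]; norm_num
    have : Tendsto f (𝓝[>] (0:ℝ)) (𝓝 1) := by
      have := hcf.tendsto
      rw [hf0] at this
      exact this.mono_left nhdsWithin_le_nhds
    exact Tendsto.congr' hev.symm this
end
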